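/- arXiv:2602.09508 — 3 statements merged into one kernel-verified Lean document; each statement's English description precedes it below -/
import Mathlib

section
/- The derivation d of 𝓑 given by d(L_{β,j}) = β L_{β,j} is an outer derivation: there is no element a ∈ 𝓑 with d = ad(a). -/
noncomputable section

abbrev B := (ℤ × ℕ) →₀ ℂ

/-- basis element `L α i` -/
def L (α : ℤ) (i : ℕ) : B := Finsupp.single (α, i) 1

/-- structure constant `(α-1)(j+1) - (β-1)(i+1)` -/
def coef (p q : ℤ × ℕ) : ℂ :=
  ((p.1 - 1) * ((q.2 : ℤ) + 1) - (q.1 - 1) * ((p.2 : ℤ) + 1) : ℤ)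

/-- the Block-type bracket, as a bilinear map -/
def br : B →ₗ[ℂ] B →ₗ[ℂ] B :=
  Finsupp.lsum ℂ fun p => LinearMap.toSpanSingleton ℂ _
    (Finsupp.lsum ℂ fun q => LinearMap.toSpanSingleton ℂ _
      (coef p q • L (p.1 + q.1) (p.2 + q.2)))

/-- the outer derivation `d`, with `d (L β j) = β • L β j` -/
def dmap : B →ₗ[ℂ] B :=
  Finsupp.lsum ℂ fun p => LinearMap.toSpanSingleton ℂ _ ((p.1 : ℂ) • L p.1 p.2)

def IsDer (D : B →ₗ[ℂ] B) : Prop := ∀ x y, D (br x y) = br (D x) y + br x (D y)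

def Is2Local (Δ : B → B) : Prop :=
  ∀ x y, ∃ D : B →ₗ[ℂ] B, IsDer D ∧ Δ x = D x ∧ Δ y = D y

/-! If `dmap = ad a`, compare the coefficients of `L β j` in `dmap (L β j) = [a, L β j]`: only the
`(0, 0)`-component `a₀` of `a` contributes, so `β = -a₀ (β + j)` for all `β, j`. The pair
`(0, 1)` forces `a₀ = 0`, and then `(1, 0)` gives `1 = 0`. -/

lemma dmap_L (β : ℤ) (j : ℕ) : dmap (L β j) = (β : ℂ) • L β j := by
  simp [dmap, L]

lemma br_single_L (p : ℤ × ℕ) (c : ℂ) (β : ℤ) (j : ℕ) :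
    br (Finsupp.single p c) (L β j) = (c * coef p (β, j)) • L (p.1 + β) (p.2 + j) := by
  simp [br, L, mul_smul]

lemma coef_zero_zero_left (q : ℤ × ℕ) : coef (0, 0) q = -(q.1 + q.2) := by
  simp only [coef]
  push_cast
  ring

lemma br_L_apply_self (a : B) (β : ℤ) (j : ℕ) :
    br a (L β j) (β, j) = a (0, 0) * coef (0, 0) (β, j) := by
  induction a using Finsupp.induction_linear with
  | zero => simp
  | add f g hf hg => simp only [map_add, LinearMap.add_apply, Finsupp.add_apply, hf, hg, add_mul]
  | single p c =>
    rw [br_single_L, L, Finsupp.smul_apply, Finsupp.single_apply, Finsupp.single_apply]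
    obtain ⟨α, i⟩ := p
    by_cases hp : (α, i) = ((0 : ℤ), (0 : ℕ))
    · simp_all
    · have hne : ¬ (α + β, i + j) = (β, j) := fun h => hp (by simp_all)
      simp only [hne, hp, if_false, smul_zero, zero_mul]

lemma eq_neg_mul_of_dmap_eq_br {a : B} (h : ∀ x, dmap x = br a x) (β : ℤ) (j : ℕ) :
    (β : ℂ) = -a (0, 0) * (β + j) := by
  have hβj := congrArg (fun f : B => f (β, j)) (h (L β j))
  simp only [dmap_L, br_L_apply_self, coef_zero_zero_left] at hβj
  simp only [L, Finsupp.smul_apply, Finsupp.single_eq_same, smul_eq_mul, mul_one] at hβj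
  linear_combination hβj

theorem d_is_outer : ¬ ∃ a : B, ∀ x : B, dmap x = br a x := by
  rintro ⟨a, h⟩
  have h01 := eq_neg_mul_of_dmap_eq_br h 0 1
  have h10 := eq_neg_mul_of_dmap_eq_br h 1 0
  push_cast at h01 h10
  exact one_ne_zero (by linear_combination h10 - h01)

end
end

section
/- Every derivation of the Block-type Lie algebra 𝓑 can be written as ad(a) + λ d for some a ∈ 𝓑 and λ ∈ ℂ, where d(L_{β,j}) = β L_{β,j}; that is, Der(𝓑) = ad(𝓑) ⊕ ℂd. -/
noncomputable section

/-! `ad (L 0 0)` multiplies `L s t` by `-(s + t)`, so `𝓑` is graded by `s + t`. For a derivation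
`D`, applying `D` to `[L 0 0, L 0 1] = -L 0 1` shows that `D (L 0 0)` has no component of degree
`0`, so it lies in the image of `ad (L 0 0)`; subtracting an inner derivation we may assume
`D (L 0 0) = 0`, and then `D` preserves the grading. Subtracting `ad b` with `b` of degree `0`
and a multiple of `d` then makes `D` vanish on `L 1 0` and on the `(0, 1)`-coefficient of
`D (L 0 1)`. Such a derivation vanishes on `L (-1) 0` and `L 0 1`, hence on every `L 1 j`, and
then along every row `L β j` in both directions, since `ad (L (-1) 0)` and `ad (L 1 0)` are
injective on the relevant homogeneous components. Uniqueness is read off at `L 0 1` and `L 1 0`. -/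

lemma coef_antisymm (p q : ℤ × ℕ) : coef p q = -coef q p := by
  simp only [coef]; push_cast; ring

lemma coef_eq_zero_iff (p q : ℤ × ℕ) :
    coef p q = 0 ↔ (p.1 - 1) * ((q.2 : ℤ) + 1) - (q.1 - 1) * ((p.2 : ℤ) + 1) = 0 :=
  Int.cast_eq_zero

lemma single_eq_smul_L (p : ℤ × ℕ) (c : ℂ) : Finsupp.single p c = c • L p.1 p.2 := by
  rw [L, Finsupp.smul_single_one]

lemma br_L_L (α : ℤ) (i : ℕ) (β : ℤ) (j : ℕ) :
    br (L α i) (L β j) = coef (α, i) (β, j) • L (α + β) (i + j) := by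
  simp [br, L]

lemma br_antisymm (x y : B) : br x y = -br y x := by
  induction x using Finsupp.induction_linear with
  | zero => simp
  | add x x' hx hx' => simp only [map_add, LinearMap.add_apply, hx, hx', neg_add]
  | single p c =>
    induction y using Finsupp.induction_linear with
    | zero => simp
    | add y y' hy hy' => simp only [map_add, LinearMap.add_apply, hy, hy', neg_add]
    | single q d =>
      simp only [single_eq_smul_L, map_smul, LinearMap.smul_apply, br_L_L]
      rw [coef_antisymm, add_comm p.1, add_comm p.2]
      module

lemma L_apply_self (α : ℤ) (i : ℕ) : L α i (α, i) = 1 :=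
  Finsupp.single_eq_same

lemma L_apply_of_ne {α : ℤ} {i : ℕ} {p : ℤ × ℕ} (h : p ≠ (α, i)) : L α i p = 0 :=
  Finsupp.single_eq_of_ne h

lemma br_L_apply (α : ℤ) (i : ℕ) (z : B) (s : ℤ) (t : ℕ) :
    br (L α i) z (s + α, t + i) = coef (α, i) (s, t) * z (s, t) := by
  induction z using Finsupp.induction_linear with
  | zero => simp
  | add z z' hz hz' => simp only [map_add, Finsupp.add_apply, hz, hz', mul_add]
  | single q c =>
    rw [single_eq_smul_L, map_smul, br_L_L]
    by_cases hq : q = (s, t)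
    · subst hq; simp [L, add_comm, mul_comm]
    · simp only [Finsupp.smul_apply]
      rw [L_apply_of_ne, L_apply_of_ne (Ne.symm hq)]
      · simp
      · contrapose! hq
        simp only [Prod.mk.injEq] at hq
        exact Prod.ext (by omega) (by omega)

lemma br_apply_L (z : B) (β : ℤ) (j : ℕ) (s : ℤ) (t : ℕ) :
    br z (L β j) (s + β, t + j) = z (s, t) * coef (s, t) (β, j) := by
  rw [br_antisymm, Finsupp.neg_apply, br_L_apply, coef_antisymm]; ring

lemma exists_br_L_eq (α : ℤ) (y : B)
    (hy : ∀ s t, coef (s, t) (α, 0) = 0 → y (s + α, t) = 0) :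
    ∃ a : B, br a (L α 0) = y ∧ ∀ s t, y (s + α, t) = 0 → a (s, t) = 0 := by
  let shift : ℤ × ℕ → ℤ × ℕ := fun p => (p.1 + α, p.2)
  have hfin : (Function.support fun p => y (shift p) / coef p (α, 0)).Finite := by
    refine (Set.Finite.preimage (f := shift) (fun p _ q _ h => ?_) y.hasFiniteSupport).subset
      fun p hp => ?_
    · simp only [shift, Prod.mk.injEq] at h
      exact Prod.ext (by omega) h.2
    · exact left_ne_zero_of_mul (by simpa [div_eq_mul_inv] using hp)
  refine ⟨Finsupp.ofSupportFinite _ hfin, ?_,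
    fun s t h => by simp [Finsupp.ofSupportFinite_coe, shift, h]⟩
  ext ⟨s, t⟩
  have h := br_apply_L (Finsupp.ofSupportFinite _ hfin) α 0 (s - α) t
  simp only [sub_add_cancel, add_zero, Finsupp.ofSupportFinite_coe, shift] at h
  rw [h]
  by_cases hc : coef (s - α, t) (α, 0) = 0
  · simpa [hc] using (hy _ _ hc).symm
  · exact div_mul_cancel₀ _ hc

lemma br_L_zero_zero_eq_zero {b : B} (hb : ∀ (s : ℤ) (t : ℕ), s + t ≠ 0 → b (s, t) = 0) :
    br b (L 0 0) = 0 := by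
  ext ⟨s, t⟩
  have h := br_apply_L b 0 0 s t
  simp only [add_zero] at h
  rw [h, Finsupp.coe_zero, Pi.zero_apply]
  by_cases hst : s + t = 0
  · rw [(coef_eq_zero_iff _ _).mpr (by push_cast; omega), mul_zero]
  · rw [hb s t hst, zero_mul]

namespace IsDer

variable {D E : B →ₗ[ℂ] B}

lemma add (hD : IsDer D) (hE : IsDer E) : IsDer (D + E) := by
  intro x y
  simp only [LinearMap.add_apply, hD x y, hE x y, map_add, LinearMap.add_apply]
  abel

lemma sub (hD : IsDer D) (hE : IsDer E) : IsDer (D - E) := by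
  intro x y
  simp only [LinearMap.sub_apply, hD x y, hE x y, map_sub, LinearMap.sub_apply]
  abel

lemma smul (c : ℂ) (hD : IsDer D) : IsDer (c • D) := by
  intro x y
  simp only [LinearMap.smul_apply, hD x y, map_smul, smul_add, LinearMap.smul_apply]

lemma of_L_L (h : ∀ (α : ℤ) (i : ℕ) (β : ℤ) (j : ℕ),
    D (br (L α i) (L β j)) = br (D (L α i)) (L β j) + br (L α i) (D (L β j))) : IsDer D := by
  intro x y
  induction x using Finsupp.induction_linear with
  | zero => simp
  | add x x' hx hx' => simp only [map_add, LinearMap.add_apply, hx, hx']; abel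
  | single p c =>
    induction y using Finsupp.induction_linear with
    | zero => simp
    | add y y' hy hy' => simp only [map_add, hy, hy']; abel
    | single q d =>
      simp only [single_eq_smul_L, map_smul, LinearMap.smul_apply, h, smul_add]

lemma coef_smul_map_L (hD : IsDer D) (α : ℤ) (i : ℕ) (β : ℤ) (j : ℕ) :
    coef (α, i) (β, j) • D (L (α + β) (i + j)) =
      br (D (L α i)) (L β j) + br (L α i) (D (L β j)) := by
  rw [← map_smul, ← br_L_L, hD]

end IsDer

lemma isDer_br_L (α : ℤ) (i : ℕ) : IsDer (br (L α i)) := by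
  refine IsDer.of_L_L fun β j γ k => ?_
  simp only [br_L_L, map_smul, LinearMap.smul_apply, smul_smul]
  rw [show α + (β + γ) = α + β + γ by ring, show i + (j + k) = i + j + k by ring,
    show β + (α + γ) = α + β + γ by ring, show j + (i + k) = i + j + k by ring, ← add_smul]
  congr 1
  simp only [coef]
  push_cast
  ring

lemma isDer_br (a : B) : IsDer (br a) := by
  induction a using Finsupp.induction_linear with
  | zero => intro x y; simp
  | add a a' ha ha' => rw [map_add]; exact ha.add ha'
  | single p c => rw [single_eq_smul_L, map_smul]; exact (isDer_br_L p.1 p.2).smul c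

lemma isDer_dmap : IsDer dmap := by
  refine IsDer.of_L_L fun β j γ k => ?_
  simp only [br_L_L, dmap_L, map_smul, LinearMap.smul_apply, smul_smul, ← add_smul]
  congr 1
  push_cast
  ring

namespace IsDer

variable {D E : B →ₗ[ℂ] B}

lemma map_L_zero_zero_apply_eq_zero (hD : IsDer D) {s : ℤ} {t : ℕ} (h : s + t = 0) :
    D (L 0 0) (s, t) = 0 := by
  have key := congrArg (· (s, t + 1)) (hD.coef_smul_map_L 0 0 0 1)
  have h₁ := br_apply_L (D (L 0 0)) 0 1 s t
  have h₂ := br_L_apply 0 0 (D (L 0 1)) s (t + 1)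
  simp only [add_zero, zero_add, Finsupp.smul_apply, Finsupp.add_apply, smul_eq_mul]
    at key h₁ h₂
  rw [h₁, h₂] at key
  have hs : (s : ℂ) = -t := by rw [eq_neg_iff_add_eq_zero]; exact_mod_cast h
  simp only [coef] at key
  push_cast at key
  rw [hs] at key
  refine (mul_eq_zero.mp ?_).resolve_right (Nat.cast_add_one_ne_zero t)
  linear_combination key

lemma map_L_apply_eq_zero_of_add_ne (hE : IsDer E) (h00 : E (L 0 0) = 0) {β s : ℤ} {j t : ℕ}
    (h : s + t ≠ β + j) : E (L β j) (s, t) = 0 := by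
  have key := congrArg (· (s, t)) (hE.coef_smul_map_L 0 0 β j)
  have hbr := br_L_apply 0 0 (E (L β j)) s t
  simp only [h00, zero_add, add_zero, map_zero, LinearMap.zero_apply, Finsupp.smul_apply,
    smul_eq_mul] at key hbr
  rw [hbr] at key
  have hne : ((s + t - (β + j) : ℤ) : ℂ) ≠ 0 := Int.cast_ne_zero.mpr (sub_ne_zero.mpr h)
  refine (mul_eq_zero.mp ?_).resolve_left hne
  simp only [coef] at key
  push_cast at key ⊢
  linear_combination key

lemma map_L_add_eq_zero (hE : IsDer E) {α γ : ℤ} {i k : ℕ} (hα : E (L α i) = 0)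
    (hγ : E (L γ k) = 0) (hc : coef (α, i) (γ, k) ≠ 0) : E (L (α + γ) (i + k)) = 0 := by
  have key := hE.coef_smul_map_L α i γ k
  rw [hα, hγ, map_zero, LinearMap.zero_apply, map_zero, add_zero] at key
  exact (smul_eq_zero.mp key).resolve_left hc

lemma map_L_eq_zero_of_map_L_add_eq_zero (hE : IsDer E) (h00 : E (L 0 0) = 0)
    {α γ : ℤ} {i k : ℕ} (hα : E (L α i) = 0) (hsum : E (L (α + γ) (i + k)) = 0)
    (hc : ∀ (s : ℤ) (t : ℕ), s + t = γ + k → coef (α, i) (s, t) ≠ 0) :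
    E (L γ k) = 0 := by
  have hbr : br (L α i) (E (L γ k)) = 0 := by
    simpa [hα, hsum] using (hE.coef_smul_map_L α i γ k).symm
  ext ⟨s, t⟩
  by_cases hst : s + t = γ + k
  · have h := congrArg (· (s + α, t + i)) hbr
    simp only [br_L_apply, Finsupp.coe_zero, Pi.zero_apply] at h
    exact (mul_eq_zero.mp h).resolve_left (hc s t hst)
  · exact hE.map_L_apply_eq_zero_of_add_ne h00 hst

lemma map_L_neg_one_zero_eq_zero (hE : IsDer E) (h00 : E (L 0 0) = 0) (h10 : E (L 1 0) = 0) :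
    E (L (-1) 0) = 0 :=
  hE.map_L_eq_zero_of_map_L_add_eq_zero h00 (α := 1) (i := 0) h10 (by simpa using h00)
    fun s t hst => by rw [Ne, coef_eq_zero_iff]; omega

lemma map_L_eq_zero_of_map_L_one_eq_zero (hE : IsDer E) (h00 : E (L 0 0) = 0) (h10 : E (L 1 0) = 0)
    {j : ℕ} (h1 : E (L 1 j) = 0) (β : ℤ) : E (L β j) = 0 := by
  have hm10 := hE.map_L_neg_one_zero_eq_zero h00 h10
  induction β using Int.inductionOn' (b := 1) with
  | zero => exact h1
  | succ β hβ ih =>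
    refine hE.map_L_eq_zero_of_map_L_add_eq_zero h00 (α := -1) (i := 0) hm10 ?_ fun s t hst => ?_
    · simpa using ih
    · rw [Ne, coef_eq_zero_iff]; omega
  | pred β _ ih =>
    by_cases hc : coef (-1, 0) (β, j) = 0
    · refine hE.map_L_eq_zero_of_map_L_add_eq_zero h00 (α := 1) (i := 0) h10 ?_ fun s t hst => ?_
      · simpa using ih
      · rw [coef_eq_zero_iff] at hc; rw [Ne, coef_eq_zero_iff]; omega
    · simpa [neg_add_eq_sub] using hE.map_L_add_eq_zero hm10 ih hc

lemma map_L_zero_one_eq_zero (hE : IsDer E) (h00 : E (L 0 0) = 0) (h10 : E (L 1 0) = 0)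
    (h01 : E (L 0 1) (0, 1) = 0) : E (L 0 1) = 0 := by
  have h11 : E (L 1 1) = br (L 1 0) (E (L 0 1)) := by
    simpa [h10, coef] using hE.coef_smul_map_L 1 0 0 1
  have key : (-4 : ℂ) • E (L 0 1) = br (L (-1) 0) (br (L 1 0) (E (L 0 1))) := by
    simpa [hE.map_L_neg_one_zero_eq_zero h00 h10, h11, coef] using hE.coef_smul_map_L (-1) 0 1 1
  ext ⟨s, t⟩
  by_cases hst : s + t = 0 + 1
  swap
  · exact hE.map_L_apply_eq_zero_of_add_ne h00 hst
  by_cases hs : s = 0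
  · obtain rfl : t = 1 := by omega
    rw [hs, h01, Finsupp.coe_zero, Pi.zero_apply]
  -- on degree 1, `ad (L (-1) 0) ∘ ad (L 1 0)` multiplies the `(s, 1 - s)` coefficient by
  -- `-(s - 1) * (s - 4)`, which is `-4` only for `s = 0` and `s = 5`
  have e := congrArg (· (s, t)) key
  have h₂ := br_L_apply (-1) 0 (br (L 1 0) (E (L 0 1))) (s + 1) t
  have h₁ := br_L_apply 1 0 (E (L 0 1)) s t
  simp only [add_neg_cancel_right, add_zero] at h₁ h₂
  simp only [Finsupp.smul_apply, smul_eq_mul, h₂, h₁, coef] at e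
  have ht : (t : ℂ) = 1 - s := by
    rw [eq_sub_iff_add_eq, add_comm]; exact_mod_cast hst
  have hne : ((s * (s - 5) : ℤ) : ℂ) ≠ 0 :=
    Int.cast_ne_zero.mpr (mul_ne_zero hs (by omega))
  refine (mul_eq_zero.mp ?_).resolve_left hne
  push_cast at e ⊢
  rw [ht] at e
  linear_combination e

lemma eq_zero_of_map_L (hE : IsDer E) (h00 : E (L 0 0) = 0) (h10 : E (L 1 0) = 0)
    (h01 : E (L 0 1) (0, 1) = 0) : E = 0 := by
  have h01' := hE.map_L_zero_one_eq_zero h00 h10 h01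
  have hcol : ∀ j : ℕ, E (L 1 j) = 0 := by
    intro j
    induction j with
    | zero => exact h10
    | succ j ih =>
      simpa [add_comm] using
        hE.map_L_add_eq_zero h01' ih (by rw [Ne, coef_eq_zero_iff]; push_cast; omega)
  refine Finsupp.lhom_ext fun p c => ?_
  rw [single_eq_smul_L, map_smul, hE.map_L_eq_zero_of_map_L_one_eq_zero h00 h10 (hcol p.2) p.1,
    smul_zero, LinearMap.zero_apply]

theorem exists_eq_br_add_smul_dmap_of_map_L_zero_zero (hD : IsDer D) (h00 : D (L 0 0) = 0) :
    ∃ (b : B) (lam : ℂ), D = br b + lam • dmap := by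
  -- `lam` is chosen so that `b (0, 0) = -D (L 0 1) (0, 1)`
  set lam := D (L 1 0) (1, 0) - D (L 0 1) (0, 1) with hlam
  set y := D (L 1 0) - lam • L 1 0
  have hy : ∀ (s : ℤ) (t : ℕ), s + t ≠ 0 → y (s + 1, t) = 0 := fun s t hst => by
    rw [Finsupp.sub_apply, Finsupp.smul_apply, hD.map_L_apply_eq_zero_of_add_ne h00 (by omega),
      L_apply_of_ne (by simp; omega), smul_zero, sub_zero]
  obtain ⟨b, hb, hb_supp⟩ := exists_br_L_eq 1 y fun s t hc =>
    hy s t (by rw [coef_eq_zero_iff] at hc; push_cast at hc; omega)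
  have hb00 : br b (L 0 0) = 0 := br_L_zero_zero_eq_zero fun s t hst => hb_supp s t (hy s t hst)
  have hE : IsDer (D - br b - lam • dmap) := (hD.sub (isDer_br b)).sub (isDer_dmap.smul lam)
  refine ⟨b, lam, sub_eq_zero.mp (sub_sub D (br b) _ ▸ hE.eq_zero_of_map_L ?_ ?_ ?_)⟩
  · simp [h00, hb00, dmap_L]
  · simp [hb, y, dmap_L]
  · have hb10 := congrArg (· (1, 0)) hb
    have e₁₀ := br_apply_L b 1 0 0 0
    have e₀₁ := br_apply_L b 0 1 0 0
    simp only [zero_add, add_zero] at e₁₀ e₀₁ hb10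
    simp only [LinearMap.sub_apply, LinearMap.smul_apply, Finsupp.sub_apply, Finsupp.smul_apply,
      smul_eq_mul, e₀₁, e₁₀, dmap_L, y] at hb10 ⊢
    norm_num [coef, L_apply_self] at hb10 ⊢
    linear_combination -hb10 + hlam

theorem exists_eq_br_add_smul_dmap (hD : IsDer D) :
    ∃ (a : B) (lam : ℂ), D = br a + lam • dmap := by
  obtain ⟨a, ha, -⟩ := exists_br_L_eq 0 (D (L 0 0)) fun s t hc =>
    hD.map_L_zero_zero_apply_eq_zero (by rw [coef_eq_zero_iff] at hc; push_cast at hc; omega)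
  obtain ⟨b, lam, h⟩ :=
    (hD.sub (isDer_br a)).exists_eq_br_add_smul_dmap_of_map_L_zero_zero (by simp [ha])
  exact ⟨a + b, lam, by rw [map_add, add_assoc, ← h]; abel⟩

end IsDer

lemma eq_zero_of_br_add_smul_dmap_eq_zero {a : B} {lam : ℂ}
    (h : ∀ x, br a x + lam • dmap x = 0) : lam = 0 ∧ ∀ x, br a x = 0 := by
  have h01 := congrArg (· (0, 1)) (h (L 0 1))
  have h10 := congrArg (· (1, 0)) (h (L 1 0))
  have e₀₁ := br_apply_L a 0 1 0 0
  have e₁₀ := br_apply_L a 1 0 0 0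
  simp only [zero_add, add_zero] at e₀₁ e₁₀
  simp only [Finsupp.add_apply, Finsupp.smul_apply, smul_eq_mul, e₀₁, e₁₀, dmap_L]
    at h01 h10
  norm_num [coef, L_apply_self] at h01 h10
  have hlam : lam = 0 := by linear_combination h10 + h01
  exact ⟨hlam, fun x => by simpa [hlam] using h x⟩

theorem der_eq_inner_plus_d :
    (∀ D : B →ₗ[ℂ] B, IsDer D → ∃ (a : B) (lam : ℂ), ∀ x : B, D x = br a x + lam • dmap x) ∧
    (∀ (a : B) (lam : ℂ), (∀ x : B, br a x + lam • dmap x = 0) →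
      lam = 0 ∧ ∀ x : B, br a x = 0) := by
  refine ⟨fun D hD => ?_, fun _ _ => eq_zero_of_br_add_smul_dmap_eq_zero⟩
  obtain ⟨a, lam, h⟩ := hD.exists_eq_br_add_smul_dmap
  exact ⟨a, lam, LinearMap.congr_fun h⟩

end
end

section
/- Let D = ad(Σ a_{α,i} L_{α,i}) + λ d be a derivation of 𝓑 (finitely many a_{α,i} nonzero) with D(L_{β,−β}) = 0, where β ∈ ℤ, −β ∈ ℤ≥0 (so β ≤ 0). Then a_{α,i} = 0 for all α ≠ −i, and if β ≠ 0 then λ = 0. -/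
/-! The coefficient of `L (α - j) (i + j)` in `[a, L (-j) j] + λ d (L (-j) j)` is
`(j + 1)(α + i) a_{α,i}`, plus `-λ j` when `(α, i) = (0, 0)`. Off the antidiagonal `α = -i` the
factor `(j + 1)(α + i)` is nonzero, which kills `a_{α,i}`; at `(0, 0)` the bracket contributes
nothing, leaving `λ j = 0`. -/

noncomputable section

lemma br_L (a : B) (β : ℤ) (j : ℕ) :
    br a (L β j) = a.sum fun p c => (c * coef p (β, j)) • L (p.1 + β) (p.2 + j) := by
  rw [br, Finsupp.lsum_apply, Finsupp.sum, LinearMap.sum_apply, Finsupp.sum]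
  refine Finset.sum_congr rfl fun p _ => ?_
  rw [LinearMap.toSpanSingleton_apply, LinearMap.smul_apply, L, Finsupp.lsum_single,
    LinearMap.toSpanSingleton_apply, one_smul, smul_smul, mul_comm]

lemma L_apply_add (α β : ℤ) (i j : ℕ) :
    L β j (α + β, i + j) = if (α, i) = (0, 0) then 1 else 0 := by
  simp only [L, Finsupp.single_apply, Prod.mk.injEq]
  congr 1
  apply propext
  omega

lemma br_L_apply_add (a : B) (α β : ℤ) (i j : ℕ) :
    br a (L β j) (α + β, i + j) = a (α, i) * coef (α, i) (β, j) := by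
  rw [br_L, Finsupp.sum_apply, Finsupp.sum, Finset.sum_eq_single (α, i)]
  · simp [L]
  · intro p _ hp
    rw [Finsupp.smul_apply, L, Finsupp.single_apply, if_neg, smul_zero]
    intro hc
    simp only [Prod.mk.injEq] at hc
    exact hp (Prod.ext (by omega) (by omega))
  · intro h
    rw [Finsupp.notMem_support_iff.mp h, zero_mul, zero_smul]
    rfl

lemma br_add_smul_dmap_L_apply_add (a : B) (lam : ℂ) (α β : ℤ) (i j : ℕ) :
    (br a (L β j) + lam • dmap (L β j)) (α + β, i + j) =
      a (α, i) * coef (α, i) (β, j) + if (α, i) = (0, 0) then lam * β else 0 := by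
  rw [Finsupp.add_apply, br_L_apply_add, dmap_L, smul_smul, Finsupp.smul_apply, L_apply_add]
  split_ifs <;> simp

lemma coef_antidiagonal (α : ℤ) (i j : ℕ) :
    coef (α, i) (-(j : ℤ), j) = (((j : ℤ) + 1) * (α + i) : ℤ) := by
  simp only [coef]
  congr 1
  ring

theorem vanishing_der_antidiagonal (j : ℕ) (a : B) (lam : ℂ)
    (h : br a (L (-(j : ℤ)) j) + lam • dmap (L (-(j : ℤ)) j) = 0) :
    (∀ (α : ℤ) (i : ℕ), α ≠ -(i : ℤ) → a (α, i) = 0) ∧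
    (j ≠ 0 → lam = 0) := by
  have coeff (α : ℤ) (i : ℕ) : a (α, i) * coef (α, i) (-(j : ℤ), j) +
      (if (α, i) = (0, 0) then lam * (-(j : ℤ) : ℤ) else 0) = 0 := by
    rw [← br_add_smul_dmap_L_apply_add, h, Finsupp.coe_zero, Pi.zero_apply]
  constructor
  · intro α i hα
    have hcoeff := coeff α i
    rw [if_neg (by simp only [Prod.mk.injEq]; omega), add_zero, coef_antidiagonal] at hcoeff
    have hfactor : ((j : ℤ) + 1) * (α + i) ≠ 0 := mul_ne_zero (by omega) (by omega)
    exact (mul_eq_zero.mp hcoeff).resolve_right (by exact_mod_cast hfactor)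
  · intro hj
    have hcoeff := coeff 0 0
    rw [if_pos rfl, coef_antidiagonal] at hcoeff
    simpa [hj] using hcoeff

end
end
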